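/- (Dobinski-type formula) For λ ∈ ℝ, r a nonnegative integer, every nonnegative integer n, and every real x, the extended degenerate Bell polynomial satisfies Bel^{(r)}_{n,λ}(x) = e^{−x} Σ_{m=0}^{n} λ^{n−m} S_1(n,m) Σ_{k=0}^{∞} (x^k/k!) (k+r)^m, where the inner infinite series converges absolutely. -/

import Mathlib

/-! Writing `(1+λt)^{(k+r)/λ} = (1+λt)^{r/λ} (((1+λt)^{1/λ} - 1) + 1)^k` and expanding
binomially gives `(k+r|λ)_n = Σ_j (k)_j S_{2,r}(n+r,j+r|λ)`, while expanding the exponential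
in the generating function gives `Bel^{(r)}_{n,λ}(x) = Σ_j S_{2,r}(n+r,j+r|λ) x^j`.
As `Σ_k (k)_j x^k/k! = x^j e^x`, together they yield
`e^x Bel^{(r)}_{n,λ}(x) = Σ_k (k+r|λ)_n x^k/k!`, and `(y|λ)_n = Σ_m λ^{n-m} S_1(n,m) y^m`
turns this into the stated formula. -/

open Finset

/-- The degenerate falling factorial `(x|λ)_n = x(x-λ)(x-2λ)⋯(x-(n-1)λ)`. -/
noncomputable def degFall (x lam : ℝ) (n : ℕ) : ℝ := ∏ i ∈ Finset.range n, (x - i * lam)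

/-- The formal power series `(1+λt)^{y/λ} = Σ_{m=0}^∞ (y|λ)_m t^m/m!`. -/
noncomputable def degExp (lam y : ℝ) : PowerSeries ℝ :=
  PowerSeries.mk fun m => degFall y lam m / m.factorial

/-- The degenerate Stirling numbers of the second kind `S_{2,λ}(n,k)`, defined by
`(1/k!)((1+λt)^{1/λ} - 1)^k = Σ_{n=k}^∞ S_{2,λ}(n,k) t^n/n!`. -/
noncomputable def degStirling2 (lam : ℝ) (n k : ℕ) : ℝ :=
  (n.factorial : ℝ) *
    PowerSeries.coeff n (((k.factorial : ℝ))⁻¹ • (degExp lam 1 - 1) ^ k)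

/-- The extended degenerate Stirling numbers of the second kind `S_{2,r}(n+r,k+r|λ)`,
defined by `(1/k!)(1+λt)^{r/λ}((1+λt)^{1/λ} - 1)^k = Σ_{n=k}^∞ S_{2,r}(n+r,k+r|λ) t^n/n!`. -/
noncomputable def extDegStirling2 (lam : ℝ) (r n k : ℕ) : ℝ :=
  (n.factorial : ℝ) *
    PowerSeries.coeff n
      (((k.factorial : ℝ))⁻¹ • (degExp lam r * (degExp lam 1 - 1) ^ k))

/-- The exponential `e^f = Σ_{k=0}^∞ f^k / k!` of a formal power series, computed
coefficientwise (the coefficientwise sums converge when `f` has zero constant term). -/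
noncomputable def expComp (f : PowerSeries ℝ) : PowerSeries ℝ :=
  PowerSeries.mk fun n => ∑' k : ℕ, PowerSeries.coeff n (f ^ k) / k.factorial

/-- The degenerate Bell polynomials, defined by
`e^{x((1+λt)^{1/λ} - 1)} = Σ_{n=0}^∞ Bel_{n,λ}(x) t^n/n!`. -/
noncomputable def degBell (lam x : ℝ) (n : ℕ) : ℝ :=
  (n.factorial : ℝ) * PowerSeries.coeff n (expComp (x • (degExp lam 1 - 1)))

/-- The extended degenerate Bell polynomials, defined by
`(1+λt)^{r/λ} e^{x((1+λt)^{1/λ} - 1)} = Σ_{n=0}^∞ Bel^{(r)}_{n,λ}(x) t^n/n!`. -/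
noncomputable def extDegBell (lam : ℝ) (r : ℕ) (x : ℝ) (n : ℕ) : ℝ :=
  (n.factorial : ℝ) *
    PowerSeries.coeff n (degExp lam r * expComp (x • (degExp lam 1 - 1)))

/-- The signed Stirling numbers of the first kind `S_1(n,k)`, defined by
`(x)_n = x(x-1)⋯(x-n+1) = Σ_{k=0}^n S_1(n,k) x^k`. -/
noncomputable def stirling1 (n k : ℕ) : ℝ :=
  (∏ i ∈ Finset.range n, (Polynomial.X - Polynomial.C (i : ℝ))).coeff k

/-- The Stirling numbers of the second kind, defined by
`(1/k!)(e^t - 1)^k = Σ_{n=k}^∞ S_2(n,k) t^n/n!`. -/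
noncomputable def stirling2 (n k : ℕ) : ℝ :=
  (n.factorial : ℝ) *
    PowerSeries.coeff n (((k.factorial : ℝ))⁻¹ • (PowerSeries.exp ℝ - 1) ^ k)

/-- The r-Stirling numbers of the second kind `S_{2,r}(n+r,k+r)`, defined by
`e^{rt}(1/k!)(e^t - 1)^k = Σ_{n=0}^∞ S_{2,r}(n+r,k+r) t^n/n!`. -/
noncomputable def rStirling2 (r n k : ℕ) : ℝ :=
  (n.factorial : ℝ) *
    PowerSeries.coeff n
      (PowerSeries.rescale (r : ℝ) (PowerSeries.exp ℝ) *
        ((k.factorial : ℝ))⁻¹ • (PowerSeries.exp ℝ - 1) ^ k)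

/-- The ordinary falling factorial `(x)_k = x(x-1)⋯(x-k+1)`. -/
noncomputable def fallFact (x : ℝ) (k : ℕ) : ℝ := ∏ i ∈ Finset.range k, (x - i)

open PowerSeries

lemma degFall_succ (x lam : ℝ) (n : ℕ) :
    degFall x lam (n + 1) = degFall x lam n * (x - n * lam) :=
  prod_range_succ _ _

theorem degFall_add (lam y z : ℝ) (n : ℕ) :
    degFall (y + z) lam n =
      ∑ p ∈ antidiagonal n, (n.choose p.1 : ℝ) * (degFall y lam p.1 * degFall z lam p.2) := by
  induction n with
  | zero => simp [degFall]
  | succ n ih =>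
    rw [degFall_succ, ih,
      sum_antidiagonal_choose_succ_mul (fun i j => degFall y lam i * degFall z lam j), sum_mul,
      ← sum_add_distrib]
    refine sum_congr rfl fun p hp => ?_
    rw [HasAntidiagonal.mem_antidiagonal] at hp
    have hp' : (p.1 + p.2 : ℝ) = n := mod_cast hp
    rw [← Nat.choose_symm_of_eq_add hp.symm, degFall_succ, degFall_succ, ← hp']
    ring

lemma coeff_degExp (lam y : ℝ) (n : ℕ) :
    coeff n (degExp lam y) = degFall y lam n / n.factorial :=
  coeff_mk _ _

theorem degExp_mul (lam y z : ℝ) : degExp lam y * degExp lam z = degExp lam (y + z) := by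
  ext n
  rw [coeff_mul, coeff_degExp, degFall_add, sum_div]
  refine sum_congr rfl fun p hp => ?_
  obtain ⟨i, j⟩ := p
  obtain rfl : i + j = n := HasAntidiagonal.mem_antidiagonal.mp hp
  have hfact : ((i + j).choose i * i.factorial * j.factorial : ℝ) = (i + j).factorial := by
    rw [Nat.choose_symm_add]; exact_mod_cast Nat.add_choose_mul_factorial_mul_factorial i j
  have hchoose : ((i + j).choose i : ℝ) ≠ 0 := mod_cast (Nat.choose_pos (i.le_add_right j)).ne'
  simp only [coeff_degExp]
  rw [← hfact]
  field_simp

lemma constantCoeff_degExp (lam y : ℝ) : constantCoeff (degExp lam y) = 1 := by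
  rw [← coeff_zero_eq_constantCoeff_apply, coeff_degExp]
  simp [degFall]

lemma X_dvd_degExp_sub_one (lam y : ℝ) : X ∣ degExp lam y - 1 := by
  rw [X_dvd_iff, map_sub, constantCoeff_degExp, map_one, sub_self]

theorem degExp_mul_degExp_one_pow (lam y : ℝ) (k : ℕ) :
    degExp lam y * degExp lam 1 ^ k = degExp lam (k + y) := by
  induction k with
  | zero => simp
  | succ k ih =>
    rw [pow_succ, ← mul_assoc, ih, degExp_mul]
    push_cast; ring_nf

theorem prod_X_sub_C_mul_eq_scaleRoots {R ι : Type*} [CommRing R] [IsDomain R]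
    (s : Finset ι) (a : ι → R) (c : R) :
    ∏ i ∈ s, (Polynomial.X - Polynomial.C (a i * c)) =
      (∏ i ∈ s, (Polynomial.X - Polynomial.C (a i))).scaleRoots c := by
  classical
  induction s using Finset.induction_on with
  | empty => simp
  | insert i s hi ih =>
    rw [prod_insert hi, prod_insert hi, Polynomial.mul_scaleRoots_of_noZeroDivisors, ih,
      Polynomial.X_sub_C_scaleRoots]

theorem degFall_eq_sum_stirling1 (lam y : ℝ) (n : ℕ) :
    degFall y lam n = ∑ m ∈ range (n + 1), lam ^ (n - m) * stirling1 n m * y ^ m := by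
  set P := ∏ i ∈ range n, (Polynomial.X - Polynomial.C (i : ℝ))
  have hP : P.natDegree = n := by
    rw [Polynomial.natDegree_finsetProd_X_sub_C_eq_card, card_range]
  have hfall : degFall y lam n = (P.scaleRoots lam).eval y := by
    rw [← prod_X_sub_C_mul_eq_scaleRoots, Polynomial.eval_prod, degFall]
    simp only [Polynomial.eval_sub, Polynomial.eval_X, Polynomial.eval_C]
  rw [hfall, Polynomial.eval_eq_sum_range, Polynomial.natDegree_scaleRoots, hP]
  refine sum_congr rfl fun m _ => ?_
  rw [Polynomial.coeff_scaleRoots, hP, stirling1]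
  ring

theorem X_pow_dvd_expComp_smul_sub {g : PowerSeries ℝ} (hg : X ∣ g) (x : ℝ) (N : ℕ) :
    X ^ N ∣ expComp (x • g) - ∑ j ∈ range N, (x ^ j / j.factorial) • g ^ j := by
  refine X_pow_dvd_iff.mpr fun m hm => ?_
  have hterm (j : ℕ) :
      coeff m ((x • g) ^ j) / j.factorial = x ^ j / j.factorial * coeff m (g ^ j) := by
    rw [smul_pow, coeff_smul, smul_eq_mul]; ring
  have htail : ∀ j ∉ range N, x ^ j / j.factorial * coeff m (g ^ j) = 0 := fun j hj => by
    rw [X_pow_dvd_iff.mp (pow_dvd_pow_of_dvd hg j) m (by simp at hj; omega), mul_zero]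
  simp only [map_sub, expComp, coeff_mk, hterm, tsum_eq_sum htail, map_sum, coeff_smul,
    smul_eq_mul, sub_self]

lemma extDegStirling2_eq_zero_of_lt (lam : ℝ) (r : ℕ) {n k : ℕ} (h : n < k) :
    extDegStirling2 lam r n k = 0 := by
  have hdvd : X ^ k ∣ degExp lam r * (degExp lam 1 - 1) ^ k :=
    dvd_mul_of_dvd_right (pow_dvd_pow_of_dvd (X_dvd_degExp_sub_one lam 1) k) _
  rw [extDegStirling2, coeff_smul, X_pow_dvd_iff.mp hdvd n h, smul_zero, mul_zero]

lemma factorial_mul_extDegStirling2 (lam : ℝ) (r n k : ℕ) :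
    k.factorial * extDegStirling2 lam r n k =
      n.factorial * coeff n (degExp lam r * (degExp lam 1 - 1) ^ k) := by
  rw [extDegStirling2, coeff_smul, smul_eq_mul]
  field_simp

theorem extDegBell_eq_sum_extDegStirling2 (lam : ℝ) (r : ℕ) (x : ℝ) (n : ℕ) :
    extDegBell lam r x n = ∑ k ∈ range (n + 1), extDegStirling2 lam r n k * x ^ k := by
  obtain ⟨q, hq⟩ := X_pow_dvd_expComp_smul_sub (X_dvd_degExp_sub_one lam 1) x (n + 1)
  rw [extDegBell, sub_eq_iff_eq_add.mp hq, mul_add, map_add, mul_left_comm,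
    coeff_X_pow_mul', if_neg (by omega), zero_add, mul_sum, map_sum, mul_sum]
  refine sum_congr rfl fun k _ => ?_
  rw [mul_smul_comm, coeff_smul, smul_eq_mul, extDegStirling2, coeff_smul, smul_eq_mul]
  ring

theorem degFall_natCast_add_eq_sum (lam : ℝ) (r n k : ℕ) :
    degFall ((k : ℝ) + r) lam n =
      ∑ j ∈ range (n + 1), (k.descFactorial j : ℝ) * extDegStirling2 lam r n j := by
  have hfall : degFall ((k : ℝ) + r) lam n =
      n.factorial * coeff n (degExp lam r * degExp lam 1 ^ k) := by
    rw [degExp_mul_degExp_one_pow, coeff_degExp]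
    field_simp
  have hbin : degExp lam 1 ^ k =
      ∑ j ∈ range (k + 1), (degExp lam 1 - 1) ^ j * (k.choose j : ℝ⟦X⟧) := by
    simpa using add_pow (degExp lam 1 - 1) 1 k
  have hsupp : ∀ j ∉ range (k + 1), (k.descFactorial j : ℝ) * extDegStirling2 lam r n j = 0 :=
    fun j hj => by
      rw [Nat.descFactorial_eq_zero_iff_lt.mpr (by simp at hj; omega), Nat.cast_zero, zero_mul]
  have hsupp' :
      ∀ j ∉ range (n + 1), (k.descFactorial j : ℝ) * extDegStirling2 lam r n j = 0 :=
    fun j hj => by rw [extDegStirling2_eq_zero_of_lt lam r (by simp at hj; omega), mul_zero]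
  calc degFall ((k : ℝ) + r) lam n
      = ∑ j ∈ range (k + 1), (k.descFactorial j : ℝ) * extDegStirling2 lam r n j := by
        rw [hfall, hbin, mul_sum, map_sum, mul_sum]
        refine sum_congr rfl fun j _ => ?_
        rw [← mul_assoc, ← map_natCast (C (R := ℝ)), mul_comm _ (C _), coeff_C_mul,
          Nat.descFactorial_eq_factorial_mul_choose, Nat.cast_mul, mul_left_comm,
          ← factorial_mul_extDegStirling2]
        ring
    _ = ∑' j, (k.descFactorial j : ℝ) * extDegStirling2 lam r n j := (tsum_eq_sum hsupp).symm
    _ = ∑ j ∈ range (n + 1), (k.descFactorial j : ℝ) * extDegStirling2 lam r n j :=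
        tsum_eq_sum hsupp'

theorem hasSum_descFactorial_mul_pow_div_factorial (x : ℝ) (j : ℕ) :
    HasSum (fun k => (k.descFactorial j : ℝ) * x ^ k / k.factorial) (x ^ j * Real.exp x) := by
  have hhead : ∑ k ∈ range j, (k.descFactorial j : ℝ) * x ^ k / k.factorial = 0 :=
    sum_eq_zero fun k hk => by
      rw [Nat.descFactorial_eq_zero_iff_lt.mpr (mem_range.mp hk), Nat.cast_zero, zero_mul,
        zero_div]
  have hshift (k : ℕ) : ((k + j).descFactorial j : ℝ) * x ^ (k + j) / (k + j).factorial =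
      x ^ j * (x ^ k / k.factorial) := by
    have h := Nat.factorial_mul_descFactorial (j.le_add_left k)
    rw [Nat.add_sub_cancel] at h
    rw [← h, pow_add]
    push_cast
    field_simp
  rw [← hasSum_nat_add_iff' j, hhead, sub_zero]
  simp only [hshift]
  exact (Real.exp_eq_exp_ℝ ▸ NormedSpace.expSeries_div_hasSum_exp x).mul_left (x ^ j)

theorem hasSum_pow_div_factorial_mul_degFall (lam : ℝ) (r : ℕ) (x : ℝ) (n : ℕ) :
    HasSum (fun k : ℕ => x ^ k / k.factorial * degFall ((k : ℝ) + r) lam n)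
      (Real.exp x * extDegBell lam r x n) := by
  rw [extDegBell_eq_sum_extDegStirling2, mul_sum]
  simp only [degFall_natCast_add_eq_sum, mul_sum]
  refine hasSum_sum fun j _ => ?_
  rw [mul_left_comm, mul_comm (Real.exp x)]
  exact ((hasSum_descFactorial_mul_pow_div_factorial x j).mul_left _).congr_fun fun k => by ring

theorem summable_abs_pow_div_factorial_mul_add_pow (x c : ℝ) (m : ℕ) :
    Summable fun k : ℕ => |x ^ k / k.factorial * ((k : ℝ) + c) ^ m| := by
  have hbound (k : ℕ) : |x ^ k / k.factorial * ((k : ℝ) + c) ^ m| ≤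
      m.factorial * Real.exp |c| * ((|x| * Real.exp 1) ^ k / k.factorial) := by
    have hexp := Real.pow_div_factorial_le_exp (k + |c|) (by positivity) m
    rw [div_le_iff₀ (by positivity)] at hexp
    have hpow : |(k : ℝ) + c| ^ m ≤ m.factorial * (Real.exp |c| * Real.exp 1 ^ k) :=
      calc |(k : ℝ) + c| ^ m ≤ ((k : ℝ) + |c|) ^ m :=
            pow_le_pow_left₀ (abs_nonneg _) ((abs_add_le _ _).trans_eq (by rw [Nat.abs_cast])) m
        _ ≤ Real.exp (k + |c|) * m.factorial := hexp
        _ = m.factorial * (Real.exp |c| * Real.exp 1 ^ k) := by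
            rw [Real.exp_add, Real.exp_one_pow]; ring
    calc |x ^ k / k.factorial * ((k : ℝ) + c) ^ m|
        = |x| ^ k / k.factorial * |(k : ℝ) + c| ^ m := by
          rw [abs_mul, abs_div, abs_pow, abs_pow, Nat.abs_cast]
      _ ≤ |x| ^ k / k.factorial * (m.factorial * (Real.exp |c| * Real.exp 1 ^ k)) := by gcongr
      _ = m.factorial * Real.exp |c| * ((|x| * Real.exp 1) ^ k / k.factorial) := by ring
  exact .of_nonneg_of_le (fun _ => abs_nonneg _) hbound
    ((Real.summable_pow_div_factorial _).mul_left _)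

theorem extDegBell_dobinski (lam : ℝ) (r : ℕ) (n : ℕ) (x : ℝ) :
    (∀ m ∈ Finset.range (n + 1),
      Summable fun k : ℕ => |x ^ k / (k.factorial : ℝ) * ((k : ℝ) + r) ^ m|) ∧
    extDegBell lam r x n =
      Real.exp (-x) *
        ∑ m ∈ Finset.range (n + 1), lam ^ (n - m) * stirling1 n m *
          ∑' k : ℕ, x ^ k / (k.factorial : ℝ) * ((k : ℝ) + r) ^ m := by
  have hsum (m : ℕ) := summable_abs_pow_div_factorial_mul_add_pow x r m
  refine ⟨fun m _ => hsum m, ?_⟩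
  have hterm (k : ℕ) : x ^ k / k.factorial * degFall ((k : ℝ) + r) lam n =
      ∑ m ∈ range (n + 1),
        lam ^ (n - m) * stirling1 n m * (x ^ k / k.factorial * ((k : ℝ) + r) ^ m) := by
    rw [degFall_eq_sum_stirling1, mul_sum]
    exact sum_congr rfl fun m _ => by ring
  calc extDegBell lam r x n
      = Real.exp (-x) * ∑' k : ℕ, x ^ k / k.factorial * degFall ((k : ℝ) + r) lam n := by
        rw [(hasSum_pow_div_factorial_mul_degFall lam r x n).tsum_eq, ← mul_assoc,
          ← Real.exp_add, neg_add_cancel, Real.exp_zero, one_mul]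
    _ = _ := by
        rw [tsum_congr hterm, Summable.tsum_finsetSum fun m _ => (hsum m).of_abs.mul_left _]
        simp only [tsum_mul_left]
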